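/- The equivalence relation ∼ on Σ satisfies: (i) for all x,y ∈ Σ and every i ∈ X, if x ∼ y then ix ∼ iy (prepending any letter preserves ∼); (ii) every equivalence class of ∼ contains at most two elements. -/
import Mathlib


open Classical

/-- The space `Σ` of infinite words over the alphabet `X = {0,1,2,3,4,5} = ℤ/6`
(indexed from `0`: the letter `w₁` of the paper is `w 0`). -/
abbrev Word := ℕ → ZMod 6

/-- The metric `δ_r` on a word space: `δ_r(w,v) = r^ℓ` where `ℓ ≥ 1` is the first
(1-indexed) position at which `w` and `v` differ, and `δ_r(w,w) = 0`. -/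
noncomputable def wordDist {X : Type*} (r : ℝ) (w v : ℕ → X) : ℝ :=
  if h : w = v then 0
  else r ^ (Nat.find (Function.ne_iff.mp h) + 1)

/-- Prepending a letter to an infinite word: `σ_i(w) = iw`. -/
def prepend {X : Type*} (i : X) (w : ℕ → X) : ℕ → X
  | 0 => i
  | n + 1 => w n

/-- `α_k = u₁ + ⋯ + u_k` in `ℤ/6` (the sum of the first `k` letters of `u`). -/
def alphaSum (u : Word) (k : ℕ) : ZMod 6 := ∑ j ∈ Finset.range k, u j

/-- The map `f : Σ → Σ`, `f(u) = v` with `v₁ = u₁` and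
`v_m = (−1)^{α_{m−1}} u_m + α_{m−1}` (mod 6); here `(−1)^α` is `+1` when `α ∈ ℤ/6` is
even and `−1` when `α` is odd.  (In 0-indexed form, position `m` corresponds to index
`m−1`, and `α_0 = 0` is even, so the case `v₁ = u₁` is subsumed.) -/
noncomputable def fMap (u : Word) : Word := fun n =>
  (if Even (alphaSum u n) then u n else -(u n)) + alphaSum u n

/-- The generating relation of `∼`: `u` and `w` are of the forms `x i α v` and
`x j α v`, where `x` is a finite word (of length `ℓ`, occupying indices `< ℓ`),
`j = i + 1` (mod 6), `α ∈ {3,4}` if `i` is odd and `α ∈ {1,2}` if `i` is even, and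
`v ∈ {0,5}^ℕ`. -/
def Tilde (u w : Word) : Prop :=
  ∃ ℓ : ℕ, (∀ m < ℓ, u m = w m) ∧ w ℓ = u ℓ + 1 ∧ (∀ m > ℓ, u m = w m) ∧
    ((¬ Even (u ℓ) ∧ (u (ℓ + 1) = 3 ∨ u (ℓ + 1) = 4)) ∨
      (Even (u ℓ) ∧ (u (ℓ + 1) = 1 ∨ u (ℓ + 1) = 2))) ∧
    (∀ m, ℓ + 2 ≤ m → u m = 0 ∨ u m = 5)

/-- The equivalence relation `∼` on `Σ` generated by `Tilde`, as a setoid. -/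
def simSetoid : Setoid Word := ⟨Relation.EqvGen Tilde, Relation.EqvGen.is_equivalence _⟩

/-- The Strichartz hexacarpet `K = Σ/∼` (with the quotient topology, `ℤ/6` being
discrete and `Σ` carrying the product topology). -/
def Hexacarpet := Quotient simSetoid

instance : TopologicalSpace Hexacarpet :=
  instTopologicalSpaceQuotient

/-- The quotient map `π : Σ → K`. -/
def piK : Word → Hexacarpet := Quotient.mk simSetoid

/-- The body of `Tilde` with the witness position exposed. -/
def TildeAt (u w : Word) (ℓ : ℕ) : Prop :=
  (∀ m < ℓ, u m = w m) ∧ w ℓ = u ℓ + 1 ∧ (∀ m > ℓ, u m = w m) ∧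
    ((¬ Even (u ℓ) ∧ (u (ℓ + 1) = 3 ∨ u (ℓ + 1) = 4)) ∨
      (Even (u ℓ) ∧ (u (ℓ + 1) = 1 ∨ u (ℓ + 1) = 2))) ∧
    (∀ m, ℓ + 2 ≤ m → u m = 0 ∨ u m = 5)

lemma tilde_iff {u w : Word} : Tilde u w ↔ ∃ ℓ, TildeAt u w ℓ := Iff.rfl

/-- The "marked position" data visible from one word alone. -/
def MarkAt (u : Word) (ℓ : ℕ) : Prop :=
  (u (ℓ + 1) = 1 ∨ u (ℓ + 1) = 2 ∨ u (ℓ + 1) = 3 ∨ u (ℓ + 1) = 4) ∧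
  ∀ m, ℓ + 2 ≤ m → u m = 0 ∨ u m = 5

lemma markAt_left {u w : Word} {ℓ : ℕ} (h : TildeAt u w ℓ) : MarkAt u ℓ := by
  obtain ⟨-, -, -, hc, ht⟩ := h
  refine ⟨?_, ht⟩
  rcases hc with ⟨-, h3 | h4⟩ | ⟨-, h1 | h2⟩ <;> tauto

lemma markAt_right {u w : Word} {ℓ : ℕ} (h : TildeAt w u ℓ) : MarkAt u ℓ := by
  obtain ⟨-, -, hgt, hc, ht⟩ := h
  have e1 : w (ℓ + 1) = u (ℓ + 1) := hgt _ (by omega)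
  refine ⟨?_, fun m hm => ?_⟩
  · rw [← e1]
    rcases hc with ⟨-, h3 | h4⟩ | ⟨-, h1 | h2⟩ <;> tauto
  · rw [← hgt m (by omega)]; exact ht m hm

lemma markAt_unique {u : Word} {ℓ ℓ' : ℕ} (h : MarkAt u ℓ) (h' : MarkAt u ℓ') :
    ℓ = ℓ' := by
  by_contra hne
  rcases Nat.lt_or_ge ℓ ℓ' with hlt | hge
  · have h05 := h.2 (ℓ' + 1) (by omega)
    rcases h05 with h0 | h0 <;> rcases h'.1 with h1 | h1 | h1 | h1 <;>
      rw [h0] at h1 <;> exact absurd h1 (by decide)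
  · have hlt : ℓ' < ℓ := lt_of_le_of_ne hge (Ne.symm hne)
    have h05 := h'.2 (ℓ + 1) (by omega)
    rcases h05 with h0 | h0 <;> rcases h.1 with h1 | h1 | h1 | h1 <;>
      rw [h0] at h1 <;> exact absurd h1 (by decide)

lemma even_add_one_zmod6 (a : ZMod 6) : Even (a + 1) ↔ ¬ Even a := by
  constructor
  · rintro ⟨r, hr⟩ ⟨s, hs⟩
    fin_cases r <;> fin_cases s <;> rw [hs] at hr <;> revert hr <;> decide
  · intro h
    fin_cases a
    · exact absurd ⟨0, rfl⟩ h
    · exact ⟨1, rfl⟩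
    · exact absurd ⟨1, rfl⟩ h
    · exact ⟨2, rfl⟩
    · exact absurd ⟨2, rfl⟩ h
    · exact ⟨0, rfl⟩

lemma no_both {u w w' : Word} {ℓ : ℕ} (h : TildeAt u w ℓ) (h' : TildeAt w' u ℓ) :
    False := by
  obtain ⟨-, -, -, hc, -⟩ := h
  obtain ⟨-, heq, hgt, hc', -⟩ := h'
  have e1 : w' (ℓ + 1) = u (ℓ + 1) := hgt _ (by omega)
  have hpar : Even (u ℓ) ↔ ¬ Even (w' ℓ) := by
    rw [heq]; exact even_add_one_zmod6 _
  rcases hc with ⟨ho, h34⟩ | ⟨he, h12⟩ <;> rcases hc' with ⟨ho', h34'⟩ | ⟨he', h12'⟩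
  · exact ho (hpar.mpr ho')
  · rw [e1] at h12'
    rcases h34 with h | h <;> rcases h12' with h'' | h'' <;> rw [h] at h'' <;>
      exact absurd h'' (by decide)
  · rw [e1] at h34'
    rcases h12 with h | h <;> rcases h34' with h'' | h'' <;> rw [h] at h'' <;>
      exact absurd h'' (by decide)
  · exact (hpar.mp he) he'

lemma left_unique {u w w' : Word} {ℓ : ℕ} (h : TildeAt u w ℓ) (h' : TildeAt u w' ℓ) :
    w = w' := by
  funext m
  rcases lt_trichotomy m ℓ with hm | hm | hm
  · rw [← h.1 m hm, h'.1 m hm]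
  · subst hm; rw [h.2.1, h'.2.1]
  · rw [← h.2.2.1 m hm, h'.2.2.1 m hm]

lemma right_unique {u w w' : Word} {ℓ : ℕ} (h : TildeAt w u ℓ) (h' : TildeAt w' u ℓ) :
    w = w' := by
  funext m
  rcases lt_trichotomy m ℓ with hm | hm | hm
  · rw [h.1 m hm, ← h'.1 m hm]
  · subst hm
    have := h.2.1.symm.trans h'.2.1
    exact add_right_cancel this
  · rw [h.2.2.1 m hm, ← h'.2.2.1 m hm]

/-- Each word has at most one `Tilde`-neighbor (in either direction). -/
lemma neighbor_unique {u w w' : Word} (h : Tilde u w ∨ Tilde w u)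
    (h' : Tilde u w' ∨ Tilde w' u) : w = w' := by
  rcases h with ⟨ℓ, h⟩ | ⟨ℓ, h⟩ <;> rcases h' with ⟨ℓ', h'⟩ | ⟨ℓ', h'⟩
  · have : ℓ = ℓ' := markAt_unique (markAt_left h) (markAt_left h')
    subst this; exact left_unique h h'
  · have : ℓ = ℓ' := markAt_unique (markAt_left h) (markAt_right h')
    subst this; exact (no_both h h').elim
  · have : ℓ = ℓ' := markAt_unique (markAt_right h) (markAt_left h')
    subst this; exact (no_both h' h).elim
  · have : ℓ = ℓ' := markAt_unique (markAt_right h) (markAt_right h')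
    subst this; exact right_unique h h'

lemma eqvGen_cases {x y : Word} (h : Relation.EqvGen Tilde x y) :
    y = x ∨ Tilde x y ∨ Tilde y x := by
  induction h with
  | rel a b hab => exact Or.inr (Or.inl hab)
  | refl a => exact Or.inl rfl
  | symm a b _ ih =>
      rcases ih with h | h | h
      · exact Or.inl h.symm
      · exact Or.inr (Or.inr h)
      · exact Or.inr (Or.inl h)
  | trans a b c _ _ ih₁ ih₂ =>
      rcases ih₁ with h₁ | h₁
      · subst h₁; exact ih₂
      · rcases ih₂ with h₂ | h₂
        · subst h₂; exact Or.inr h₁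
        · -- b has neighbors a and c
          have hba : Tilde b a ∨ Tilde a b := by tauto
          have hbc : Tilde b c ∨ Tilde c b := by tauto
          have : a = c := neighbor_unique hba hbc
          exact Or.inl this.symm

lemma tilde_prepend {x y : Word} (h : Tilde x y) (i : ZMod 6) :
    Tilde (prepend i x) (prepend i y) := by
  obtain ⟨ℓ, hlt, heq, hgt, hc, ht⟩ := h
  refine ⟨ℓ + 1, fun m hm => ?_, heq, fun m hm => ?_, hc, fun m hm => ?_⟩
  · cases m with
    | zero => rfl
    | succ k => exact hlt k (by omega)
  · cases m with
    | zero => omega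
    | succ k => exact hgt k (by omega)
  · cases m with
    | zero => omega
    | succ k => exact ht k (by omega)

/-- (i) prepending any letter preserves `∼`; (ii) every `∼`-equivalence
class contains at most two elements. -/
theorem stmt9 :
    (∀ x y : Word, Relation.EqvGen Tilde x y →
      ∀ i : ZMod 6, Relation.EqvGen Tilde (prepend i x) (prepend i y)) ∧
    (∀ x y z : Word, Relation.EqvGen Tilde x y → Relation.EqvGen Tilde x z →
      y = z ∨ y = x ∨ z = x) := by
  constructor
  · intro x y h i
    induction h with
    | rel a b hab => exact Relation.EqvGen.rel _ _ (tilde_prepend hab i)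
    | refl a => exact Relation.EqvGen.refl _
    | symm a b _ ih => exact Relation.EqvGen.symm _ _ ih
    | trans a b c _ _ ih₁ ih₂ => exact Relation.EqvGen.trans _ _ _ ih₁ ih₂
  · intro x y z hxy hxz
    rcases eqvGen_cases hxy with h₁ | h₁
    · exact Or.inr (Or.inl h₁)
    · rcases eqvGen_cases hxz with h₂ | h₂
      · exact Or.inr (Or.inr h₂)
      · exact Or.inl (neighbor_unique h₁ h₂)
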